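/- Let n ≥ 2, let A be a real n×n singular irreducible M-matrix, and let L_G and U_G be the FSAI factors associated with the complete patterns S_L = {(i,j) : i ≥ j} \ {(n,n−1)} and S_U = {(i,j) : i ≤ j} \ {(n−1,n)}. Then L_G A U_G is a diagonal matrix except possibly for its (n,n−1) and (n−1,n) entries; its diagonal entries d_1, …, d_n are strictly positive; and d_{n−1} d_n = (L_G A U_G)_{n,n−1} · (L_G A U_G)_{n−1,n}. -/

import Mathlib

open Matrix

/-- The spectral radius of a real matrix: the maximum modulus of its complex
eigenvalues (supremum of moduli of elements of the complex spectrum). -/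
noncomputable def specRad {n : ℕ} (B : Matrix (Fin n) (Fin n) ℝ) : ℝ :=
  sSup ((fun z : ℂ => ‖z‖) '' spectrum ℂ (B.map Complex.ofReal))

/-- A real square matrix is a Z-matrix if its off-diagonal entries are nonpositive. -/
def IsZMatrix {n : ℕ} (A : Matrix (Fin n) (Fin n) ℝ) : Prop :=
  ∀ i j, i ≠ j → A i j ≤ 0

/-- A Z-matrix `A` is a nonsingular M-matrix if `A = s • 1 - B` with `B`
entrywise nonnegative and `s > ρ(B)`. -/
def IsNonsingularMMatrix {n : ℕ} (A : Matrix (Fin n) (Fin n) ℝ) : Prop :=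
  IsZMatrix A ∧ ∃ (s : ℝ) (B : Matrix (Fin n) (Fin n) ℝ),
    (∀ i j, 0 ≤ B i j) ∧ specRad B < s ∧ A = s • (1 : Matrix (Fin n) (Fin n) ℝ) - B

/-- A Z-matrix `A` is a singular M-matrix if `A = ρ(B) • 1 - B` with `B`
entrywise nonnegative. -/
def IsSingularMMatrix {n : ℕ} (A : Matrix (Fin n) (Fin n) ℝ) : Prop :=
  IsZMatrix A ∧ ∃ B : Matrix (Fin n) (Fin n) ℝ,
    (∀ i j, 0 ≤ B i j) ∧ A = specRad B • (1 : Matrix (Fin n) (Fin n) ℝ) - B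

/-- A matrix is irreducible if its directed graph (edge `i → j` iff `A i j ≠ 0`)
is strongly connected. -/
def IsIrreducibleMatrix {n : ℕ} (A : Matrix (Fin n) (Fin n) ℝ) : Prop :=
  ∀ i j : Fin n, Relation.ReflTransGen (fun a b : Fin n => A a b ≠ 0) i j

/-- Lower triangular real matrix. -/
def IsLowerTri {n : ℕ} (L : Matrix (Fin n) (Fin n) ℝ) : Prop :=
  ∀ i j : Fin n, i < j → L i j = 0

/-- Upper triangular real matrix. -/
def IsUpperTri {n : ℕ} (U : Matrix (Fin n) (Fin n) ℝ) : Prop :=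
  ∀ i j : Fin n, j < i → U i j = 0

/-- `L` is an FSAI lower triangular factor of `A` for the pattern `S`:
`L` is lower triangular, vanishes off the pattern, and `(L * A) i j = δ i j`
on the pattern. -/
def IsFSAILowerFactor {n : ℕ} (A L : Matrix (Fin n) (Fin n) ℝ)
    (S : Set (Fin n × Fin n)) : Prop :=
  IsLowerTri L ∧ (∀ p : Fin n × Fin n, p ∉ S → L p.1 p.2 = 0) ∧
    ∀ p : Fin n × Fin n, p ∈ S → (L * A) p.1 p.2 = if p.1 = p.2 then 1 else 0

/-- `U` is an FSAI upper triangular factor of `A` for the pattern `S`: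
`U` is upper triangular, vanishes off the pattern, and `(A * U) i j = δ i j`
on the pattern. -/
def IsFSAIUpperFactor {n : ℕ} (A U : Matrix (Fin n) (Fin n) ℝ)
    (S : Set (Fin n × Fin n)) : Prop :=
  IsUpperTri U ∧ (∀ p : Fin n × Fin n, p ∉ S → U p.1 p.2 = 0) ∧
    ∀ p : Fin n × Fin n, p ∈ S → (A * U) p.1 p.2 = if p.1 = p.2 then 1 else 0

/-!
Perron–Frobenius gives a positive null vector `x` of `A = ρ(B) I - B`: an eigenvalue of `B` of
modulus `ρ(B)` yields `w ≥ 0` with `B w ≥ ρ w`; pushing `w` through the positive matrix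
`(I + B)^K`, a strict inequality anywhere would give `u > 0` with `B u ≥ (ρ + ε) u`, which
Gelfand's formula forbids.

Off the two exceptional positions, the FSAI conditions make `L A` upper and `A U` lower
unitriangular, so `L A U` is diagonal up to the entries `(n, n-1)` and `(n-1, n)`, and
`d_i = (U_G)_ii`. Column `i` of `U_G` solves the principal subsystem of `A` on its pattern rows,
a proper set of indices; comparing it with `x` along the strongly connected graph of `A`
(a minimum principle) shows that this column is nonnegative with a positive `i`-th entry.
Finally `det (L A U) = 0`, and a null vector of this almost diagonal matrix is supported on the
last two coordinates, so the trailing `2 × 2` block is singular.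
-/

open Filter Topology

lemma exists_pos_smul_le {ι : Type*} [Finite ι] {a : ι → ℝ} (ha : ∀ i, 0 < a i) (b : ι → ℝ) :
    ∃ ε : ℝ, 0 < ε ∧ ε • b ≤ a := by
  have hsmall : ∀ᶠ ε in 𝓝[>] (0 : ℝ), ∀ i, ε * b i < a i :=
    eventually_all.2 fun i => nhdsWithin_le_nhds <|
      ((continuous_id.mul continuous_const).tendsto' 0 0 (zero_mul _)).eventually
        (gt_mem_nhds (ha i))
  obtain ⟨ε, hε, hε0⟩ := (hsmall.and self_mem_nhdsWithin).exists
  exact ⟨ε, hε0, fun i => (hε i).le⟩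

namespace Matrix

section NonnegMatrices

variable {ι : Type*} [Fintype ι]

lemma mulVec_mono {B : Matrix ι ι ℝ} (hB : ∀ i j, 0 ≤ B i j) {u v : ι → ℝ} (huv : u ≤ v) :
    B *ᵥ u ≤ B *ᵥ v := fun i =>
  dotProduct_le_dotProduct_of_nonneg_left huv (hB i)

lemma mulVec_pos {P : Matrix ι ι ℝ} (hP : ∀ i j, 0 < P i j) {w : ι → ℝ} (hw : 0 ≤ w) {k : ι}
    (hk : 0 < w k) (i : ι) : 0 < (P *ᵥ w) i :=
  Finset.sum_pos' (fun j _ => mul_nonneg (hP i j).le (hw j))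
    ⟨k, Finset.mem_univ k, mul_pos (hP i k) hk⟩

lemma exists_pow_one_add_pos [DecidableEq ι] {B : Matrix ι ι ℝ} (hB : ∀ i j, 0 ≤ B i j)
    (hirr : ∀ i j, Relation.ReflTransGen (fun a b => B a b ≠ 0) i j) :
    ∃ K : ℕ, ∀ i j, 0 < ((1 + B) ^ K) i j := by
  have hN : ∀ i j, 0 ≤ (1 + B) i j := fun i j => by
    rw [add_apply, one_apply]; split_ifs <;> linarith [hB i j]
  have hmono : ∀ i j, Monotone fun K : ℕ => ((1 + B) ^ K) i j := fun i j =>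
    monotone_nat_of_le_succ fun K => by
      rw [pow_succ, mul_add, mul_one, add_apply, mul_apply]
      exact le_add_of_nonneg_right
        (Finset.sum_nonneg fun k _ => mul_nonneg (pow_apply_nonneg hN K i k) (hB k j))
  have hreach : ∀ i j, ∃ K : ℕ, 0 < ((1 + B) ^ K) i j := by
    intro i j
    induction hirr i j with
    | refl => exact ⟨0, by simp⟩
    | @tail b c _ hbc ih =>
      obtain ⟨K, hK⟩ := ih
      have hBbc : 0 < (1 + B) b c := by
        rw [add_apply, one_apply]
        split_ifs <;> linarith [(hB b c).lt_of_ne' hbc]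
      refine ⟨K + 1, ?_⟩
      rw [pow_succ, mul_apply]
      exact (mul_pos hK hBbc).trans_le <| Finset.single_le_sum
        (fun k _ => mul_nonneg (pow_apply_nonneg hN K i k) (hN k c)) (Finset.mem_univ b)
  choose K hK using hreach
  refine ⟨Finset.univ.sup fun p : ι × ι => K p.1 p.2, fun i j => ?_⟩
  exact (hK i j).trans_le
    (hmono i j (Finset.le_sup (f := fun p => K p.1 p.2) (Finset.mem_univ (i, j))))

end NonnegMatrices

variable {m : ℕ}

lemma norm_le_specRad {B : Matrix (Fin m) (Fin m) ℝ} {z : ℂ}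
    (hz : z ∈ spectrum ℂ (B.map Complex.ofReal)) : ‖z‖ ≤ specRad B :=
  le_csSup ((finite_spectrum _).image _).bddAbove ⟨z, hz, rfl⟩

lemma specRad_nonneg (B : Matrix (Fin m) (Fin m) ℝ) : 0 ≤ specRad B :=
  Real.sSup_nonneg <| by rintro _ ⟨z, -, rfl⟩; exact norm_nonneg z

lemma exists_mulVec_eq_smul_of_mem_spectrum {M : Matrix (Fin m) (Fin m) ℂ} {z : ℂ}
    (hz : z ∈ spectrum ℂ M) : ∃ v ≠ 0, M *ᵥ v = z • v := by
  rw [spectrum.mem_iff, Algebra.algebraMap_eq_smul_one, isUnit_iff_isUnit_det,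
    isUnit_iff_ne_zero, not_not, ← exists_mulVec_eq_zero_iff] at hz
  obtain ⟨v, hv, hzv⟩ := hz
  refine ⟨v, hv, ?_⟩
  rwa [sub_mulVec, smul_mulVec, one_mulVec, sub_eq_zero, eq_comm] at hzv

section Gelfand

attribute [local instance] Matrix.linftyOpNormedRing Matrix.linftyOpNormedAlgebra

lemma exists_mem_spectrum_norm_eq_specRad [NeZero m] (B : Matrix (Fin m) (Fin m) ℝ) :
    ∃ z ∈ spectrum ℂ (B.map Complex.ofReal), ‖z‖ = specRad B :=
  ((spectrum.nonempty _).image _).csSup_mem ((finite_spectrum _).image _)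

lemma eventually_norm_pow_mulVec_le {B : Matrix (Fin m) (Fin m) ℝ} {r : ℝ}
    (hr : specRad B < r) (v : Fin m → ℝ) :
    ∀ᶠ k in atTop, ‖B ^ k *ᵥ v‖ ≤ r ^ k * ‖v‖ := by
  have hr0 : 0 < r := (specRad_nonneg B).trans_lt hr
  set B' := B.map Complex.ofReal
  have hsr : spectralRadius ℂ B' < ENNReal.ofReal r := by
    refine lt_of_le_of_lt (iSup₂_le fun z hz => ?_) ((ENNReal.ofReal_lt_ofReal_iff hr0).2 hr)
    rw [← enorm_eq_nnnorm, ← ofReal_norm]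
    exact ENNReal.ofReal_le_ofReal (norm_le_specRad hz)
  filter_upwards [(spectrum.pow_norm_pow_one_div_tendsto_nhds_spectralRadius B').eventually
    (gt_mem_nhds hsr), eventually_ne_atTop 0] with k hk hk0
  have hpow : ‖B' ^ k‖ ≤ r ^ k := by
    rw [ENNReal.ofReal_lt_ofReal_iff hr0, one_div] at hk
    rw [← Real.rpow_inv_natCast_pow (norm_nonneg _) hk0]
    exact pow_le_pow_left₀ (by positivity) hk.le k
  have hv : ‖(Complex.ofRealHom : ℝ →+* ℂ) ∘ v‖ = ‖v‖ := by
    simp only [Pi.norm_def, Function.comp_apply, Complex.ofRealHom_eq_coe, Complex.nnnorm_real]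
  rw [pi_norm_le_iff_of_nonneg (by positivity)]
  intro i
  calc ‖(B ^ k *ᵥ v) i‖ = ‖(B' ^ k *ᵥ (Complex.ofRealHom ∘ v)) i‖ := by
        rw [← Complex.norm_real, ← Complex.ofRealHom_eq_coe, RingHom.map_mulVec, Matrix.map_pow]
        rfl
    _ ≤ ‖B' ^ k *ᵥ (Complex.ofRealHom ∘ v)‖ := norm_le_pi_norm _ i
    _ ≤ ‖B' ^ k‖ * ‖v‖ := hv ▸ linfty_opNorm_mulVec _ _
    _ ≤ r ^ k * ‖v‖ := by gcongr

end Gelfand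

lemma le_specRad_of_smul_le_mulVec {B : Matrix (Fin m) (Fin m) ℝ} (hB : ∀ i j, 0 ≤ B i j)
    {u : Fin m → ℝ} {i₀ : Fin m} (hu : 0 < u i₀) {t : ℝ} (htu : t • u ≤ B *ᵥ u) :
    t ≤ specRad B := by
  by_contra! hlt
  have ht : 0 ≤ t := (specRad_nonneg B).trans hlt.le
  obtain ⟨r, hρr, hrt⟩ := exists_between hlt
  have hr : 0 < r := (specRad_nonneg B).trans_lt hρr
  have hpow : ∀ k : ℕ, t ^ k • u ≤ B ^ k *ᵥ u := by
    intro k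
    induction k with
    | zero => simp
    | succ k ih =>
      calc t ^ (k + 1) • u = t ^ k • t • u := by rw [pow_succ, mul_smul]
        _ ≤ t ^ k • (B *ᵥ u) := smul_le_smul_of_nonneg_left htu (by positivity)
        _ = B *ᵥ (t ^ k • u) := (mulVec_smul _ _ _).symm
        _ ≤ B *ᵥ (B ^ k *ᵥ u) := mulVec_mono hB ih
        _ = B ^ (k + 1) *ᵥ u := by rw [mulVec_mulVec, pow_succ']
  have hgrow : Tendsto (fun k : ℕ => (t / r) ^ k) atTop atTop :=
    tendsto_pow_atTop_atTop_of_one_lt ((one_lt_div hr).2 hrt)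
  obtain ⟨k, hk, hbig⟩ := ((eventually_norm_pow_mulVec_le hρr u).and
    (hgrow.eventually_gt_atTop (‖u‖ / u i₀))).exists
  have : t ^ k * u i₀ ≤ r ^ k * ‖u‖ :=
    (hpow k i₀).trans ((le_abs_self _).trans ((norm_le_pi_norm _ i₀).trans hk))
  rw [div_pow, div_lt_iff₀ hu, div_mul_eq_mul_div, lt_div_iff₀ (by positivity)] at hbig
  linarith

lemma exists_nonneg_specRad_smul_le_mulVec [NeZero m] {B : Matrix (Fin m) (Fin m) ℝ}
    (hB : ∀ i j, 0 ≤ B i j) :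
    ∃ w : Fin m → ℝ, 0 ≤ w ∧ w ≠ 0 ∧ specRad B • w ≤ B *ᵥ w := by
  obtain ⟨z, hz, hzρ⟩ := exists_mem_spectrum_norm_eq_specRad B
  obtain ⟨v, hv, hBv⟩ := exists_mulVec_eq_smul_of_mem_spectrum hz
  refine ⟨fun i => ‖v i‖, fun i => norm_nonneg _,
    fun h => hv (funext fun i => norm_eq_zero.1 (congrFun h i)), fun i => ?_⟩
  have hrow : ∑ j, (B i j : ℂ) * v j = z * v i := congrFun hBv i
  calc specRad B * ‖v i‖ = ‖∑ j, (B i j : ℂ) * v j‖ := by rw [hrow, norm_mul, hzρ]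
    _ ≤ ∑ j, ‖(B i j : ℂ) * v j‖ := norm_sum_le _ _
    _ = (B *ᵥ fun j => ‖v j‖) i := by
        simp [mulVec, dotProduct, abs_of_nonneg (hB _ _)]

theorem exists_pos_mulVec_eq_specRad_smul [NeZero m] {B : Matrix (Fin m) (Fin m) ℝ}
    (hB : ∀ i j, 0 ≤ B i j) (hirr : IsIrreducibleMatrix B) :
    ∃ x : Fin m → ℝ, (∀ i, 0 < x i) ∧ B *ᵥ x = specRad B • x := by
  obtain ⟨w, hw0, hw, hBw⟩ := exists_nonneg_specRad_smul_le_mulVec hB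
  obtain ⟨k, hk⟩ := Function.ne_iff.1 hw
  obtain ⟨K, hK⟩ := exists_pow_one_add_pos hB hirr
  set P := (1 + B) ^ K
  have hcomm : ∀ y, B *ᵥ (P *ᵥ y) = P *ᵥ (B *ᵥ y) := fun y => by
    rw [mulVec_mulVec, mulVec_mulVec,
      ((Commute.one_right B).add_right (Commute.refl B)).pow_right K]
  have hPw := mulVec_pos hK hw0 ((hw0 k).lt_of_ne' hk)
  refine ⟨P *ᵥ w, hPw, ?_⟩
  by_contra hne
  have hd : B *ᵥ w - specRad B • w ≠ 0 := fun h =>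
    hne (by rw [hcomm, sub_eq_zero.1 h, mulVec_smul])
  obtain ⟨k', hk'⟩ := Function.ne_iff.1 hd
  have hd0 : 0 ≤ B *ᵥ w - specRad B • w := sub_nonneg.2 hBw
  obtain ⟨ε, hε, hεle⟩ :=
    exists_pos_smul_le (mulVec_pos hK hd0 ((hd0 k').lt_of_ne' hk')) (P *ᵥ w)
  have hup : (specRad B + ε) • (P *ᵥ w) ≤ B *ᵥ (P *ᵥ w) := by
    rw [add_smul, hcomm]
    calc specRad B • (P *ᵥ w) + ε • (P *ᵥ w)
        ≤ specRad B • (P *ᵥ w) + P *ᵥ (B *ᵥ w - specRad B • w) :=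
          add_le_add_right hεle _
      _ = P *ᵥ (B *ᵥ w) := by rw [mulVec_sub, mulVec_smul, add_sub_cancel]
  linarith [le_specRad_of_smul_le_mulVec hB (hPw k) hup]

end Matrix

section MMatrix

variable {n : ℕ}

theorem IsSingularMMatrix.exists_pos_mulVec_eq_zero [NeZero n]
    {A : Matrix (Fin n) (Fin n) ℝ} (hA : IsSingularMMatrix A) (hirr : IsIrreducibleMatrix A) :
    ∃ x : Fin n → ℝ, (∀ i, 0 < x i) ∧ A *ᵥ x = 0 := by
  obtain ⟨-, B, hB, rfl⟩ := hA
  have hirrB : IsIrreducibleMatrix B := fun i j =>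
    (hirr i j).lift' id fun a b hab => by
      by_cases h : a = b
      · exact h ▸ Relation.ReflTransGen.refl
      · exact .single fun hB0 => hab (by simp [h, show B a b = 0 from hB0])
  obtain ⟨x, hx, hBx⟩ := Matrix.exists_pos_mulVec_eq_specRad_smul hB hirrB
  exact ⟨x, hx, by rw [sub_mulVec, smul_mulVec, one_mulVec, hBx, sub_self]⟩

theorem IsZMatrix.nonneg_of_mulVec_nonneg_on {A : Matrix (Fin n) (Fin n) ℝ} (hZ : IsZMatrix A)
    (hirr : IsIrreducibleMatrix A) {x : Fin n → ℝ} (hx : ∀ i, 0 < x i) (hAx : 0 ≤ A *ᵥ x)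
    {T : Set (Fin n)} {l : Fin n} (hl : l ∉ T) {u : Fin n → ℝ} (hu : ∀ k ∉ T, u k = 0)
    (hAu : ∀ k ∈ T, 0 ≤ (A *ᵥ u) k) : 0 ≤ u := by
  by_contra hneg
  obtain ⟨i, hi⟩ : ∃ i, u i < 0 := by simpa [Pi.le_def] using hneg
  obtain ⟨k, -, hk⟩ :=
    Finset.univ.exists_min_image (fun k => u k / x k) ⟨i, Finset.mem_univ i⟩
  set t := u k / x k
  have ht : t < 0 := (hk i (Finset.mem_univ i)).trans_lt (div_neg_of_neg_of_pos hi (hx i))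
  -- `w ≥ 0` vanishes at `k`; its zero set is closed under the edges of `A` and lies in `T`,
  -- so it cannot reach `l`.
  set w := u - t • x
  have hw : 0 ≤ w := fun j => by
    simpa [w, sub_nonneg] using (le_div_iff₀ (hx j)).1 (hk j (Finset.mem_univ j))
  have hwk : w k = 0 := by simp [w, t, (hx k).ne']
  have hwT : ∀ j, w j = 0 → j ∈ T := fun j hj => by
    by_contra hjT
    have hwj : w j = -t * x j := by simp [w, hu j hjT]
    nlinarith [hx j]
  have hclosed : ∀ a c, w a = 0 → A a c ≠ 0 → w c = 0 := by
    intro a c ha hac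
    have hterm : ∀ j ∈ Finset.univ, A a j * w j ≤ 0 := fun j _ => by
      by_cases hj : j = a
      · simp [hj, ha]
      · exact mul_nonpos_of_nonpos_of_nonneg (hZ a j (Ne.symm hj)) (hw j)
    have hAw : 0 ≤ (A *ᵥ w) a := by
      rw [mulVec_sub, mulVec_smul, Pi.sub_apply, Pi.smul_apply, smul_eq_mul]
      nlinarith [hAu a (hwT a ha), show 0 ≤ (A *ᵥ x) a from hAx a]
    have hsum : ∑ j, A a j * w j = 0 := le_antisymm (Finset.sum_nonpos hterm) hAw
    exact (mul_eq_zero.1 ((Finset.sum_eq_zero_iff_of_nonpos hterm).1 hsum c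
      (Finset.mem_univ c))).resolve_left hac
  have hreach : ∀ c, Relation.ReflTransGen (fun a b => A a b ≠ 0) k c → w c = 0 := by
    intro c hc
    induction hc with
    | refl => exact hwk
    | tail _ hbc ih => exact hclosed _ _ ih hbc
  exact hl (hwT l (hreach l (hirr k l)))

theorem IsZMatrix.pos_of_mulVec_pos {A : Matrix (Fin n) (Fin n) ℝ} (hZ : IsZMatrix A)
    {u : Fin n → ℝ} (hu : 0 ≤ u) {j : Fin n} (hAu : 0 < (A *ᵥ u) j) : 0 < u j := by
  refine (hu j).lt_of_ne fun hj => hAu.not_ge ?_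
  change ∑ k, A j k * u k ≤ 0
  refine Finset.sum_nonpos fun k _ => ?_
  by_cases hk : k = j
  · simp [hk, ← hj]
  · exact mul_nonpos_of_nonpos_of_nonneg (hZ j k (Ne.symm hk)) (hu k)

theorem IsFSAIUpperFactor.diag_pos {A U : Matrix (Fin n) (Fin n) ℝ} {S : Set (Fin n × Fin n)}
    (hU : IsFSAIUpperFactor A U S) (hZ : IsZMatrix A) (hirr : IsIrreducibleMatrix A)
    {x : Fin n → ℝ} (hx : ∀ i, 0 < x i) (hAx : 0 ≤ A *ᵥ x) {i l : Fin n} (hii : (i, i) ∈ S)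
    (hli : (l, i) ∉ S) : 0 < U i i := by
  have hcol : ∀ k, (A *ᵥ fun j => U j i) k = (A * U) k i := fun k => rfl
  have hnonneg : 0 ≤ fun j => U j i :=
    hZ.nonneg_of_mulVec_nonneg_on (T := {k | (k, i) ∈ S}) hirr hx hAx hli
      (fun k hk => hU.2.1 (k, i) hk) fun k hk => by
        rw [hcol, hU.2.2 (k, i) hk]; split_ifs <;> norm_num
  exact hZ.pos_of_mulVec_pos hnonneg
    (by rw [hcol, hU.2.2 (i, i) hii, if_pos rfl]; exact one_pos)

end MMatrix

section Triangular

variable {n : ℕ}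

lemma mul_apply_eq_zero_of_isUpperTri {P U : Matrix (Fin n) (Fin n) ℝ} (hU : IsUpperTri U)
    {i j : Fin n} (hP : ∀ k ≤ j, P i k = 0) : (P * U) i j = 0 := by
  refine (mul_apply ..).trans (Finset.sum_eq_zero fun k _ => ?_)
  by_cases hk : k ≤ j
  · rw [hP k hk, zero_mul]
  · rw [hU k j (not_le.1 hk), mul_zero]

lemma mul_apply_eq_zero_of_isLowerTri {L Q : Matrix (Fin n) (Fin n) ℝ} (hL : IsLowerTri L)
    {i j : Fin n} (hQ : ∀ k ≤ i, Q k j = 0) : (L * Q) i j = 0 := by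
  refine (mul_apply ..).trans (Finset.sum_eq_zero fun k _ => ?_)
  by_cases hk : k ≤ i
  · rw [hQ k hk, mul_zero]
  · rw [hL i k (not_le.1 hk), zero_mul]

lemma mul_apply_self_of_isUpperTri {P U : Matrix (Fin n) (Fin n) ℝ} (hU : IsUpperTri U)
    {i : Fin n} (hPi : P i i = 1) (hP : ∀ k < i, P i k * U k i = 0) : (P * U) i i = U i i := by
  rw [mul_apply, Finset.sum_eq_single i (fun k _ hki => ?_) (by simp), hPi, one_mul]
  rcases hki.lt_or_gt with hk | hk
  · exact hP k hk
  · rw [hU k i hk, mul_zero]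

end Triangular

lemma mul_diag_eq_mul_antidiag_of_det_eq_zero {ι : Type*} [Fintype ι] [DecidableEq ι]
    {G : Matrix ι ι ℝ} {a b : ι} (hab : a ≠ b)
    (hG : ∀ i j, i ≠ j → ¬(i = b ∧ j = a) → ¬(i = a ∧ j = b) → G i j = 0)
    (hdiag : ∀ i, i ≠ a → i ≠ b → G i i ≠ 0) (hdet : G.det = 0) :
    G a a * G b b = G b a * G a b := by
  obtain ⟨y, hy, hGy⟩ := Matrix.exists_mulVec_eq_zero_iff.2 hdet
  have hsupp : ∀ i, i ≠ a → i ≠ b → y i = 0 := fun i hia hib => by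
    have hrow : ∑ j, G i j * y j = 0 := congrFun hGy i
    rw [Finset.sum_eq_single i (fun j _ hji => by
      rw [hG i j (Ne.symm hji) (fun h => hib h.1) (fun h => hia h.1), zero_mul]) (by simp)] at hrow
    exact (mul_eq_zero.1 hrow).resolve_left (hdiag i hia hib)
  have hrow : ∀ i, G i a * y a + G i b * y b = 0 := fun i => by
    rw [← Fintype.sum_eq_add a b hab (f := fun j => G i j * y j) fun j hj => by
      rw [hsupp j hj.1 hj.2, mul_zero]]
    exact congrFun hGy i
  have hy' : y a ≠ 0 ∨ y b ≠ 0 := by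
    by_contra! h
    refine hy (funext fun i => ?_)
    by_cases hia : i = a
    · exact hia ▸ h.1
    by_cases hib : i = b
    · exact hib ▸ h.2
    exact hsupp i hia hib
  rcases hy' with h | h
  · exact mul_right_cancel₀ h (by linear_combination G b b * hrow a - G a b * hrow b)
  · exact mul_right_cancel₀ h (by linear_combination G a a * hrow b - G b a * hrow a)

section CompletePatterns

variable {n : ℕ} {A L U : Matrix (Fin n) (Fin n) ℝ} {a b : Fin n}

lemma IsFSAILowerFactor.mul_mul_apply_self
    (hL : IsFSAILowerFactor A L ({p | p.2 ≤ p.1} \ {(b, a)}))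
    (hU : IsFSAIUpperFactor A U ({p | p.1 ≤ p.2} \ {(a, b)})) (hab : a ≠ b) (i : Fin n) :
    (L * A * U) i i = U i i := by
  have hii : (i, i) ≠ (b, a) := fun h => hab ((Prod.mk.inj h).2.symm.trans (Prod.mk.inj h).1)
  refine mul_apply_self_of_isUpperTri hU.1 (by rw [hL.2.2 (i, i) ⟨le_refl i, hii⟩, if_pos rfl])
    fun k hk => ?_
  by_cases hik : (i, k) = (b, a)
  · obtain ⟨rfl, rfl⟩ := Prod.mk.inj hik
    rw [hU.2.1 (k, i) (fun h => h.2 rfl), mul_zero]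
  · rw [hL.2.2 (i, k) ⟨hk.le, hik⟩, if_neg hk.ne', zero_mul]

lemma IsFSAILowerFactor.mul_mul_apply_eq_zero
    (hL : IsFSAILowerFactor A L ({p | p.2 ≤ p.1} \ {(b, a)}))
    (hU : IsFSAIUpperFactor A U ({p | p.1 ≤ p.2} \ {(a, b)})) (hab : a.val + 1 = b.val)
    {i j : Fin n} (hij : i ≠ j) (hba : ¬(i = b ∧ j = a)) (hab' : ¬(i = a ∧ j = b)) :
    (L * A * U) i j = 0 := by
  have hmid (k : Fin n) (hak : a ≤ k) (hkb : k < b) : k = a :=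
    Fin.ext (by rw [Fin.le_def] at hak; rw [Fin.lt_def] at hkb; omega)
  rcases hij.lt_or_gt with h | h
  · rw [Matrix.mul_assoc]
    refine mul_apply_eq_zero_of_isLowerTri hL.1 fun k hk => ?_
    refine (hU.2.2 (k, j) ⟨hk.trans h.le, fun hkj => hab' ?_⟩).trans (if_neg (hk.trans_lt h).ne)
    obtain ⟨rfl, rfl⟩ := Prod.mk.inj hkj
    exact ⟨hmid i hk h, rfl⟩
  · refine mul_apply_eq_zero_of_isUpperTri hU.1 fun k hk => ?_
    refine (hL.2.2 (i, k) ⟨hk.trans h.le, fun hik => hba ?_⟩).trans (if_neg (hk.trans_lt h).ne')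
    obtain ⟨rfl, rfl⟩ := Prod.mk.inj hik
    exact ⟨rfl, hmid j hk h⟩

theorem IsFSAILowerFactor.mul_mul_apply_self_pos
    (hL : IsFSAILowerFactor A L ({p | p.2 ≤ p.1} \ {(b, a)}))
    (hU : IsFSAIUpperFactor A U ({p | p.1 ≤ p.2} \ {(a, b)})) (hZ : IsZMatrix A)
    (hirr : IsIrreducibleMatrix A) {x : Fin n → ℝ} (hx : ∀ i, 0 < x i) (hAx : 0 ≤ A *ᵥ x)
    (hab : a ≠ b) (hb : ∀ i, i ≤ b) (i : Fin n) : 0 < (L * A * U) i i := by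
  rw [hL.mul_mul_apply_self hU hab]
  have hii : (i, i) ∈ ({p : Fin n × Fin n | p.1 ≤ p.2} \ {(a, b)}) :=
    ⟨le_refl i, fun h => hab ((Prod.mk.inj h).1.symm.trans (Prod.mk.inj h).2)⟩
  by_cases hib : i = b
  · subst hib
    exact hU.diag_pos hZ hirr hx hAx hii (l := a) fun h => h.2 rfl
  · exact hU.diag_pos hZ hirr hx hAx hii (l := b) fun h => hib (le_antisymm (hb i) h.1)

end CompletePatterns

theorem fsai_complete_pattern_structure (n : ℕ) (hn : 2 ≤ n)
    (A : Matrix (Fin n) (Fin n) ℝ)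
    (hA : IsSingularMMatrix A) (hirr : IsIrreducibleMatrix A)
    (L U : Matrix (Fin n) (Fin n) ℝ)
    (hL : IsFSAILowerFactor A L
      ({p : Fin n × Fin n | p.2 ≤ p.1} \
        {((⟨n - 1, by omega⟩ : Fin n), (⟨n - 2, by omega⟩ : Fin n))}))
    (hU : IsFSAIUpperFactor A U
      ({p : Fin n × Fin n | p.1 ≤ p.2} \
        {((⟨n - 2, by omega⟩ : Fin n), (⟨n - 1, by omega⟩ : Fin n))})) :
    (∀ i j : Fin n, i ≠ j →
      ¬(i = (⟨n - 1, by omega⟩ : Fin n) ∧ j = (⟨n - 2, by omega⟩ : Fin n)) →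
      ¬(i = (⟨n - 2, by omega⟩ : Fin n) ∧ j = (⟨n - 1, by omega⟩ : Fin n)) →
      (L * A * U) i j = 0) ∧
    (∀ i, 0 < (L * A * U) i i) ∧
    (L * A * U) (⟨n - 2, by omega⟩ : Fin n) (⟨n - 2, by omega⟩ : Fin n) *
        (L * A * U) (⟨n - 1, by omega⟩ : Fin n) (⟨n - 1, by omega⟩ : Fin n)
      = (L * A * U) (⟨n - 1, by omega⟩ : Fin n) (⟨n - 2, by omega⟩ : Fin n) *
        (L * A * U) (⟨n - 2, by omega⟩ : Fin n) (⟨n - 1, by omega⟩ : Fin n) := by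
  have : NeZero n := ⟨by omega⟩
  obtain ⟨x, hx, hAx⟩ := hA.exists_pos_mulVec_eq_zero hirr
  have hab : (⟨n - 2, by omega⟩ : Fin n) ≠ ⟨n - 1, by omega⟩ :=
    Fin.ne_of_val_ne (show n - 2 ≠ n - 1 by omega)
  have hoff := fun i j =>
    hL.mul_mul_apply_eq_zero hU (i := i) (j := j) (show n - 2 + 1 = n - 1 by omega)
  have hpos := hL.mul_mul_apply_self_pos hU hA.1 hirr hx hAx.ge hab
    fun i => Fin.le_def.2 (Nat.le_sub_one_of_lt i.isLt)
  have hdetA : A.det = 0 :=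
    exists_mulVec_eq_zero_iff.1 ⟨x, fun h => (hx 0).ne' (congrFun h 0), hAx⟩
  refine ⟨hoff, hpos,
    mul_diag_eq_mul_antidiag_of_det_eq_zero hab hoff (fun i _ _ => (hpos i).ne') ?_⟩
  rw [det_mul, det_mul, hdetA, mul_zero, zero_mul]
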